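/- arXiv:2011.01578 — 3 statements merged into one kernel-verified Lean document; each statement's English description precedes it below -/
import Mathlib

section
/- (Discrete risk barrier certificate implies forward invariance in risk) Let ρ : (Ω → ℝ) → ℝ be a functional that is monotone (h ≤ h' pointwise implies ρ(h) ≤ ρ(h')) and positively homogeneous (ρ(λh) = λρ(h) for λ ≥ 0). Consider a stochastic discrete-time system x^{t+1} = f(x^t, w^t) with i.i.d. disturbances, a continuous function h, and α ∈ (0,1). If ρ(h ∘ f(x, ·)) ≥ α·h(x) for all states x, then for every t ≥ 0, the t-fold composition ρ^t applied to h(x^t) satisfies ρ^t(h(x^t)) ≥ α^t · h(x_0). In particular, if h(x_0) ≥ 0 then ρ^t(h(x^t)) ≥ 0 for all t. -/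
noncomputable def nestedRisk {X W : Type*} (ρ : (W → ℝ) → ℝ) (f : X → W → X)
    (h : X → ℝ) : ℕ → X → ℝ
  | 0, x => h x
  | t + 1, x => ρ (fun w => nestedRisk ρ f h t (f x w))

theorem risk_barrier_invariance {X W : Type*}
    (ρ : (W → ℝ) → ℝ)
    (hmono : ∀ g g' : W → ℝ, (∀ w, g w ≤ g' w) → ρ g ≤ ρ g')
    (hhom : ∀ (lam : ℝ) (g : W → ℝ), 0 ≤ lam → ρ (fun w => lam * g w) = lam * ρ g)
    (f : X → W → X) (h : X → ℝ) (α : ℝ) (hα : α ∈ Set.Ioo (0:ℝ) 1)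
    (hbarrier : ∀ x : X, α * h x ≤ ρ (fun w => h (f x w)))
    (x₀ : X) :
    (∀ t : ℕ, α ^ t * h x₀ ≤ nestedRisk ρ f h t x₀) ∧
      (0 ≤ h x₀ → ∀ t : ℕ, 0 ≤ nestedRisk ρ f h t x₀) := by
  obtain ⟨hα0, hα1⟩ := hα
  have key : ∀ t : ℕ, ∀ x : X, α ^ t * h x ≤ nestedRisk ρ f h t x := by
    intro t
    induction t with
    | zero => intro x; simp [nestedRisk]
    | succ t ih =>
      intro x
      have hpow : (0:ℝ) ≤ α ^ t := le_of_lt (pow_pos hα0 t)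
      calc α ^ (t + 1) * h x = α ^ t * (α * h x) := by ring
        _ ≤ α ^ t * ρ (fun w => h (f x w)) :=
            mul_le_mul_of_nonneg_left (hbarrier x) hpow
        _ = ρ (fun w => α ^ t * h (f x w)) := (hhom _ _ hpow).symm
        _ ≤ ρ (fun w => nestedRisk ρ f h t (f x w)) :=
            hmono _ _ (fun w => ih (f x w))
        _ = nestedRisk ρ f h (t + 1) x := rfl
  refine ⟨fun t => key t x₀, fun hx t => le_trans ?_ (key t x₀)⟩
  positivity
end

section
/- (Conjunction of barrier functions) Under the setting of the risk barrier theorem with a monotone, positively homogeneous risk functional ρ and α ∈ (0,1): if ρ(min_{i=1..k} h_i ∘ f(x,·)) ≥ α · min_{i=1..k} h_i(x) for all states x, and min_i h_i(x_0) ≥ 0, then for all t ≥ 0 and all i ∈ {1,…,k}, ρ^t(h_i(x^t)) ≥ 0. -/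
lemma nestedRisk_mono {X W : Type*} (ρ : (W → ℝ) → ℝ)
    (hmono : ∀ g g' : W → ℝ, (∀ w, g w ≤ g' w) → ρ g ≤ ρ g')
    (f : X → W → X) (h h' : X → ℝ) (hle : ∀ x, h x ≤ h' x) :
    ∀ (t : ℕ) (x : X), nestedRisk ρ f h t x ≤ nestedRisk ρ f h' t x := by
  intro t
  induction t with
  | zero => intro x; exact hle x
  | succ t ih =>
    intro x
    exact hmono _ _ (fun w => ih (f x w))

theorem risk_barrier_conjunction {X W : Type*}
    (ρ : (W → ℝ) → ℝ)
    (hmono : ∀ g g' : W → ℝ, (∀ w, g w ≤ g' w) → ρ g ≤ ρ g')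
    (hhom : ∀ (lam : ℝ) (g : W → ℝ), 0 ≤ lam → ρ (fun w => lam * g w) = lam * ρ g)
    (f : X → W → X) (k : ℕ) (hk : 0 < k) (h : Fin k → X → ℝ)
    (α : ℝ) (hα : α ∈ Set.Ioo (0:ℝ) 1)
    (hbarrier : ∀ x : X, α * (⨅ i, h i x) ≤ ρ (fun w => ⨅ i, h i (f x w)))
    (x₀ : X) (hinit : 0 ≤ ⨅ i, h i x₀) :
    ∀ (t : ℕ) (i : Fin k), 0 ≤ nestedRisk ρ f (h i) t x₀ := by
  have : Nonempty (Fin k) := ⟨⟨0, hk⟩⟩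
  set H : X → ℝ := fun x => ⨅ i, h i x with hH
  have key : ∀ (t : ℕ) (x : X), α ^ t * H x ≤ nestedRisk ρ f H t x := by
    intro t
    induction t with
    | zero => intro x; simp [nestedRisk]
    | succ t ih =>
      intro x
      have h1 : ρ (fun w => α ^ t * H (f x w)) ≤ ρ (fun w => nestedRisk ρ f H t (f x w)) :=
        hmono _ _ (fun w => ih (f x w))
      have h2 : ρ (fun w => α ^ t * H (f x w)) = α ^ t * ρ (fun w => H (f x w)) :=
        hhom _ _ (pow_nonneg hα.1.le t)
      have h3 : α * H x ≤ ρ (fun w => H (f x w)) := hbarrier x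
      calc α ^ (t + 1) * H x = α ^ t * (α * H x) := by ring
        _ ≤ α ^ t * ρ (fun w => H (f x w)) :=
            mul_le_mul_of_nonneg_left h3 (pow_nonneg hα.1.le t)
        _ = ρ (fun w => α ^ t * H (f x w)) := h2.symm
        _ ≤ _ := h1
  intro t i
  have h0 : 0 ≤ α ^ t * H x₀ :=
    mul_nonneg (pow_nonneg hα.1.le t) hinit
  have hHle : ∀ x, H x ≤ h i x := fun x =>
    ciInf_le (Set.Finite.bddBelow (Set.finite_range _)) i
  calc (0:ℝ) ≤ α ^ t * H x₀ := h0
    _ ≤ nestedRisk ρ f H t x₀ := key t x₀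
    _ ≤ nestedRisk ρ f (h i) t x₀ := nestedRisk_mono ρ hmono f H (h i) hHle t x₀
end

section
/- For a random variable h on a finite probability space and β ∈ (0,1), the infimum in the definition CVaR_β(h) = inf_{ζ ∈ ℝ} E[ζ + max(h − ζ, 0)/β] is attained at some ζ* ∈ [min_ω h(ω), max_ω h(ω)]. -/
open Finset

noncomputable def cvar {Ω : Type*} [Fintype Ω] (p : Ω → ℝ) (β : ℝ) (h : Ω → ℝ) : ℝ :=
  ⨅ ζ : ℝ, ∑ ω, p ω * (ζ + max (h ω - ζ) 0 / β)

theorem cvar_inf_attained {Ω : Type*} [Fintype Ω] [Nonempty Ω]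
    (p : Ω → ℝ) (hp : ∀ ω, 0 < p ω) (hp1 : ∑ ω, p ω = 1)
    (β : ℝ) (hβ : β ∈ Set.Ioo (0:ℝ) 1) (h : Ω → ℝ) :
    ∃ ζ₀ ∈ Set.Icc (⨅ ω, h ω) (⨆ ω, h ω),
      (∑ ω, p ω * (ζ₀ + max (h ω - ζ₀) 0 / β)) = cvar p β h := by
  obtain ⟨hβ0, hβ1⟩ := hβ
  set g : ℝ → ℝ := fun ζ => ∑ ω, p ω * (ζ + max (h ω - ζ) 0 / β) with hg
  set m := ⨅ ω, h ω with hm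
  set M := ⨆ ω, h ω with hM
  have hmle : ∀ ω, m ≤ h ω := fun ω => ciInf_le (Set.Finite.bddBelow (Set.finite_range h)) ω
  have hleM : ∀ ω, h ω ≤ M := fun ω => le_ciSup (Set.Finite.bddAbove (Set.finite_range h)) ω
  have hmM : m ≤ M := le_trans (hmle (Classical.arbitrary Ω)) (hleM _)
  have hcont : Continuous g := by
    apply continuous_finset_sum
    intro ω _
    exact continuous_const.mul (continuous_id.add
      (((continuous_const.sub continuous_id).max continuous_const).div_const β))
  obtain ⟨ζ₀, hζ₀mem, hζ₀min⟩ :=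
    isCompact_Icc.exists_isMinOn (s := Set.Icc m M) (Set.nonempty_Icc.2 hmM)
      hcont.continuousOn
  have hlow : ∀ ζ, ζ ≤ m → g m ≤ g ζ := by
    intro ζ hζ
    apply Finset.sum_le_sum
    intro ω _
    have h1 : max (h ω - m) 0 = h ω - m := max_eq_left (by linarith [hmle ω])
    have h2 : max (h ω - ζ) 0 = h ω - ζ := max_eq_left (by linarith [hmle ω])
    simp only [hg, h1, h2]
    have key : m + (h ω - m) / β ≤ ζ + (h ω - ζ) / β := by
      rw [← sub_nonneg]
      have heq : ζ + (h ω - ζ) / β - (m + (h ω - m) / β) = (m - ζ) * (1 / β - 1) := by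
        field_simp
        ring
      rw [heq]
      have h1β : (1:ℝ) ≤ 1 / β := one_le_one_div hβ0 hβ1.le
      apply mul_nonneg (by linarith) (by linarith)
    exact mul_le_mul_of_nonneg_left key (hp ω).le
  have hhigh : ∀ ζ, M ≤ ζ → g M ≤ g ζ := by
    intro ζ hζ
    apply Finset.sum_le_sum
    intro ω _
    have h1 : max (h ω - M) 0 = 0 := max_eq_right (by linarith [hleM ω])
    simp only [hg, h1, zero_div]
    have h2 : (0:ℝ) ≤ max (h ω - ζ) 0 / β := div_nonneg (le_max_right _ _) hβ0.le
    have hpω := (hp ω).le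
    have key : M + 0 ≤ ζ + max (h ω - ζ) 0 / β := by linarith
    exact mul_le_mul_of_nonneg_left key hpω
  have hglobal : ∀ ζ, g ζ₀ ≤ g ζ := by
    intro ζ
    rcases le_total ζ m with hc | hc
    · exact le_trans (hζ₀min (Set.left_mem_Icc.2 hmM)) (hlow ζ hc)
    rcases le_total M ζ with hc2 | hc2
    · exact le_trans (hζ₀min (Set.right_mem_Icc.2 hmM)) (hhigh ζ hc2)
    · exact hζ₀min ⟨hc, hc2⟩
  refine ⟨ζ₀, hζ₀mem, ?_⟩
  have hbdd : BddBelow (Set.range g) := ⟨g ζ₀, by rintro _ ⟨ζ, rfl⟩; exact hglobal ζ⟩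
  show g ζ₀ = cvar p β h
  exact (le_antisymm (ciInf_le hbdd ζ₀) (le_ciInf hglobal)).symm
end
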